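/- arXiv:1411.1690 — 2 statements merged into one kernel-verified Lean document; each statement's English description precedes it below -/
import Mathlib

section
/- With the setup of the previous statement, define the Metropolis–Hastings transition kernels T(θ, B) = ∫_B P_a(θ,θ') q(θ, dθ') + P_r(θ)·1[θ ∈ B] and T_ε(θ, B) = ∫_B P_{a,ε}(θ,θ') q(θ, dθ') + P_{r,ε}(θ)·1[θ ∈ B]. Then for every θ, the total variation distance between T_ε(θ,·) and T(θ,·) is at most δ. -/
open MeasureTheory

theorem stmt4 {Θ : Type*} [MeasurableSpace Θ]
    (Pa Paε : Θ → Θ → ℝ) (δ : ℝ)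
    (hPa : Measurable (Function.uncurry Pa)) (hPaε : Measurable (Function.uncurry Paε))
    (hPa01 : ∀ θ θ', Pa θ θ' ∈ Set.Icc (0:ℝ) 1)
    (hPaε01 : ∀ θ θ', Paε θ θ' ∈ Set.Icc (0:ℝ) 1)
    (hclose : ∀ θ θ', |Paε θ θ' - Pa θ θ'| ≤ δ)
    (q : Θ → Measure Θ) (hq : ∀ θ, IsProbabilityMeasure (q θ))
    (Pr Prε : Θ → ℝ)
    (hPr : ∀ θ, Pr θ = ∫ θ', (1 - Pa θ θ') ∂(q θ))
    (hPrε : ∀ θ, Prε θ = ∫ θ', (1 - Paε θ θ') ∂(q θ))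
    (T Tε : Θ → Set Θ → ℝ)
    (hT : ∀ θ B, T θ B = (∫ θ' in B, Pa θ θ' ∂(q θ)) + Pr θ * (B.indicator (fun _ => (1:ℝ)) θ))
    (hTε : ∀ θ B, Tε θ B = (∫ θ' in B, Paε θ θ' ∂(q θ)) + Prε θ * (B.indicator (fun _ => (1:ℝ)) θ)) :
    ∀ θ, ∀ B : Set Θ, MeasurableSet B → |Tε θ B - T θ B| ≤ δ := by
  intro θ B hB
  have hδ0 : 0 ≤ δ := le_trans (abs_nonneg _) (hclose θ θ)
  haveI := hq θ
  set μ := q θ with hμ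
  have hmPa : Measurable (Pa θ) := hPa.of_uncurry_left
  have hmPaε : Measurable (Paε θ) := hPaε.of_uncurry_left
  have hiPa : Integrable (Pa θ) μ := by
    refine (integrable_const (1:ℝ)).mono' hmPa.aestronglyMeasurable ?_
    filter_upwards with x
    rw [Real.norm_eq_abs, abs_le]
    exact ⟨le_trans (by norm_num) (hPa01 θ x).1, (hPa01 θ x).2⟩
  have hiPaε : Integrable (Paε θ) μ := by
    refine (integrable_const (1:ℝ)).mono' hmPaε.aestronglyMeasurable ?_
    filter_upwards with x
    rw [Real.norm_eq_abs, abs_le]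
    exact ⟨le_trans (by norm_num) (hPaε01 θ x).1, (hPaε01 θ x).2⟩
  set f : Θ → ℝ := fun θ' => Paε θ θ' - Pa θ θ' with hf
  have hif : Integrable f μ := hiPaε.sub hiPa
  have key : ∀ S : Set Θ, |∫ x in S, f x ∂μ| ≤ δ := by
    intro S
    have h1 : ‖∫ x in S, f x ∂μ‖ ≤ δ * (μ S).toReal := by
      refine norm_setIntegral_le_of_norm_le_const (measure_lt_top μ S) ?_
      intro x _
      simpa [Real.norm_eq_abs] using hclose θ x
    have h2 : (μ S).toReal ≤ 1 := by
      have := prob_le_one (μ := μ) (s := S)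
      simpa using ENNReal.toReal_le_of_le_ofReal (by norm_num) (by simpa using this)
    calc |∫ x in S, f x ∂μ| ≤ δ * (μ S).toReal := h1
      _ ≤ δ * 1 := by nlinarith
      _ = δ := mul_one δ
  have hsetf : ∀ S : Set Θ, ∫ x in S, f x ∂μ
      = (∫ x in S, Paε θ x ∂μ) - ∫ x in S, Pa θ x ∂μ := fun S =>
    integral_sub (hiPaε.restrict) (hiPa.restrict)
  have hPrd : Prε θ - Pr θ = - ∫ x, f x ∂μ := by
    rw [hPr, hPrε, integral_sub (integrable_const 1) hiPa,
      integral_sub (integrable_const 1) hiPaε,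
      integral_sub hiPaε hiPa]
    ring
  rw [hT, hTε]
  by_cases hθ : θ ∈ B
  · have hcompl : ∫ x in B, f x ∂μ + ∫ x in Bᶜ, f x ∂μ = ∫ x, f x ∂μ :=
      integral_add_compl hB hif
    have : (∫ θ' in B, Paε θ θ' ∂μ) + Prε θ * B.indicator (fun _ => (1:ℝ)) θ
        - ((∫ θ' in B, Pa θ θ' ∂μ) + Pr θ * B.indicator (fun _ => (1:ℝ)) θ)
        = - ∫ x in Bᶜ, f x ∂μ := by
      simp only [Set.indicator_of_mem hθ, mul_one]
      have := hsetf B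
      linarith [hPrd, hcompl, hsetf B]
    rw [this, abs_neg]
    exact key Bᶜ
  · have : (∫ θ' in B, Paε θ θ' ∂μ) + Prε θ * B.indicator (fun _ => (1:ℝ)) θ
        - ((∫ θ' in B, Pa θ θ' ∂μ) + Pr θ * B.indicator (fun _ => (1:ℝ)) θ)
        = ∫ x in B, f x ∂μ := by
      simp only [Set.indicator_of_notMem hθ, mul_zero]
      linarith [hsetf B]
    rw [this]
    exact key B
end

section
/- Let X₁, …, X_n be sampled uniformly without replacement from a finite population of N real numbers with population mean μ, each value bounded in absolute value by C > 0. Then for any t > 0, P(X̄_n − μ > t) ≤ exp(−n t² / (2 C²)), where X̄_n is the sample mean. -/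
open Finset Real

variable {N : ℕ}

noncomputable def myE (a : Fin N → ℝ) (s : Finset (Fin N)) (k : ℕ) : ℝ :=
  ∑ t ∈ s.powersetCard k, ∏ i ∈ t, a i

lemma myE_nonneg {a : Fin N → ℝ} (ha : ∀ i, 0 ≤ a i) (s : Finset (Fin N)) (k : ℕ) :
    0 ≤ myE a s k :=
  Finset.sum_nonneg fun t _ => Finset.prod_nonneg fun i _ => ha i

lemma myE_zero (a : Fin N → ℝ) (s : Finset (Fin N)) : myE a s 0 = 1 := by
  simp [myE]

lemma myE_insert {a : Fin N → ℝ} {x : Fin N} {s : Finset (Fin N)} (h : x ∉ s) (k : ℕ) :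
    myE a (insert x s) (k + 1) = myE a s (k + 1) + a x * myE a s k := by
  unfold myE
  rw [Finset.powersetCard_succ_insert h, Finset.sum_union, Finset.sum_image, Finset.mul_sum]
  · congr 1
    refine Finset.sum_congr rfl fun t ht => ?_
    exact Finset.prod_insert (fun hx => h ((Finset.mem_powersetCard.1 ht).1 hx))
  · intro t ht u hu htu
    have hxt : x ∉ t := fun hx => h ((Finset.mem_powersetCard.1 ht).1 hx)
    have hxu : x ∉ u := fun hx => h ((Finset.mem_powersetCard.1 hu).1 hx)
    rw [← Finset.erase_insert hxt, htu, Finset.erase_insert hxu]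
  · rw [Finset.disjoint_right]
    rintro t ht ht'
    obtain ⟨u, hu, rfl⟩ := Finset.mem_image.1 ht
    exact (fun hx => h ((Finset.mem_powersetCard.1 ht').1 hx)) (Finset.mem_insert_self x u)

lemma powersetCard_erase_eq_filter (j : Fin N) (k : ℕ) :
    (Finset.univ.erase j).powersetCard k
      = (Finset.univ.powersetCard k).filter (fun t => j ∉ t) := by
  ext t
  simp only [Finset.mem_powersetCard, Finset.mem_filter, Finset.subset_erase]
  tauto

lemma swap_sum (k : ℕ) (F : Fin N → Finset (Fin N) → ℝ) :
    ∑ j, ∑ t ∈ (Finset.univ.erase j).powersetCard k, F j t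
      = ∑ t ∈ Finset.univ.powersetCard k, ∑ j ∈ tᶜ, F j t := by
  simp_rw [powersetCard_erase_eq_filter, Finset.sum_filter]
  rw [Finset.sum_comm]
  refine Finset.sum_congr rfl fun t _ => ?_
  rw [← Finset.sum_filter]
  congr 1
  ext j
  simp

lemma C3 {a : Fin N → ℝ} (k : ℕ) :
    ∑ j, myE a (Finset.univ.erase j) k = ((N : ℝ) - k) * myE a Finset.univ k := by
  unfold myE
  rw [swap_sum k (fun _ t => ∏ i ∈ t, a i), Finset.mul_sum]
  refine Finset.sum_congr rfl fun t ht => ?_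
  rw [Finset.sum_const, nsmul_eq_mul]
  congr 1
  have hk : t.card = k := (Finset.mem_powersetCard.1 ht).2
  have hcc : tᶜ.card = N - k := by
    rw [Finset.card_compl, hk, Fintype.card_fin]
  rw [hcc, Nat.cast_sub (hk ▸ (Finset.card_le_univ t).trans_eq (by simp))]


lemma C12 {a : Fin N → ℝ} (k : ℕ) :
    ((k : ℝ) + 1) * myE a Finset.univ (k + 1)
      = ∑ j, a j * myE a (Finset.univ.erase j) k := by
  unfold myE
  simp_rw [Finset.mul_sum]
  rw [swap_sum k (fun j t => a j * ∏ i ∈ t, a i)]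
  have RHS : ∑ t ∈ Finset.univ.powersetCard k, ∑ j ∈ tᶜ, (a j * ∏ i ∈ t, a i)
      = ∑ u ∈ Finset.univ.powersetCard (k + 1), ∑ j ∈ u, ∏ i ∈ u, a i := by
    rw [Finset.sum_sigma', Finset.sum_sigma']
    refine Finset.sum_nbij' (fun p => ⟨insert p.2 p.1, p.2⟩) (fun p => ⟨p.1.erase p.2, p.2⟩)
      ?_ ?_ ?_ ?_ ?_
    · rintro ⟨t, j⟩ hp
      simp only [Finset.mem_sigma, Finset.mem_powersetCard] at hp ⊢
      obtain ⟨⟨-, hc⟩, hj⟩ := hp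
      have hjt : j ∉ t := by simpa using hj
      exact ⟨⟨Finset.subset_univ _, by rw [Finset.card_insert_of_notMem hjt, hc]⟩,
        Finset.mem_insert_self _ _⟩
    · rintro ⟨u, j⟩ hp
      simp only [Finset.mem_sigma, Finset.mem_powersetCard] at hp ⊢
      obtain ⟨⟨-, hc⟩, hj⟩ := hp
      exact ⟨⟨Finset.subset_univ _, by rw [Finset.card_erase_of_mem hj, hc]; rfl⟩,
        by simp⟩
    · rintro ⟨t, j⟩ hp
      simp only [Finset.mem_sigma] at hp
      have hjt : j ∉ t := by simpa using hp.2
      simp [Finset.erase_insert hjt]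
    · rintro ⟨u, j⟩ hp
      simp only [Finset.mem_sigma] at hp
      simp [Finset.insert_erase hp.2]
    · rintro ⟨t, j⟩ hp
      simp only [Finset.mem_sigma] at hp
      have hjt : j ∉ t := by simpa using hp.2
      exact (Finset.prod_insert hjt).symm
  rw [RHS]
  refine Finset.sum_congr rfl fun u hu => ?_
  rw [Finset.sum_const, nsmul_eq_mul, (Finset.mem_powersetCard.1 hu).2]
  push_cast
  ring

lemma antivary_B {a : Fin N → ℝ} (ha : ∀ i, 0 ≤ a i) (k : ℕ) :
    Antivary a (fun j => myE a (Finset.univ.erase j) k) := by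
  rcases k with - | m
  · intro i j h
    simp [myE_zero] at h
  · intro i j h
    dsimp at h
    rcases eq_or_ne i j with rfl | hij
    · exact absurd h (lt_irrefl _)
    have hji : j ∈ Finset.univ.erase i := Finset.mem_erase.2 ⟨Ne.symm hij, Finset.mem_univ j⟩
    have hij' : i ∈ Finset.univ.erase j := Finset.mem_erase.2 ⟨hij, Finset.mem_univ i⟩
    have e1 : (Finset.univ.erase i) = insert j ((Finset.univ.erase i).erase j) :=
      (Finset.insert_erase hji).symm
    have e2 : (Finset.univ.erase j) = insert i ((Finset.univ.erase j).erase i) :=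
      (Finset.insert_erase hij').symm
    have ecomm : (Finset.univ.erase j).erase i = (Finset.univ.erase i).erase j :=
      Finset.erase_right_comm
    rw [e1, myE_insert (Finset.notMem_erase _ _)] at h
    rw [e2, myE_insert (Finset.notMem_erase _ _), ecomm] at h
    have hM : a j * myE a ((Finset.univ.erase i).erase j) m
        < a i * myE a ((Finset.univ.erase i).erase j) m := by linarith
    have hMnn : 0 ≤ myE a ((Finset.univ.erase i).erase j) m := myE_nonneg ha _ _
    by_contra hc
    push_neg at hc
    nlinarith

lemma step_ineq {a : Fin N → ℝ} (ha : ∀ i, 0 ≤ a i) (k : ℕ) :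
    (N : ℝ) * (((k : ℝ) + 1) * myE a Finset.univ (k + 1))
      ≤ (∑ j, a j) * (((N : ℝ) - k) * myE a Finset.univ k) := by
  rw [C12]
  have := (antivary_B ha k).card_mul_sum_le_sum_mul_sum
  rw [Fintype.card_fin] at this
  calc (N : ℝ) * ∑ j, a j * myE a (Finset.univ.erase j) k
      ≤ (∑ j, a j) * ∑ j, myE a (Finset.univ.erase j) k := this
    _ = (∑ j, a j) * (((N : ℝ) - k) * myE a Finset.univ k) := by rw [C3]

lemma maclaurin {a : Fin N → ℝ} (ha : ∀ i, 0 ≤ a i) :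
    ∀ k : ℕ, myE a Finset.univ k * (N : ℝ) ^ k ≤ (N.choose k : ℝ) * (∑ j, a j) ^ k := by
  have hS : 0 ≤ ∑ j, a j := Finset.sum_nonneg fun j _ => ha j
  intro k
  induction k with
  | zero => simp [myE_zero]
  | succ k ih =>
    rcases le_or_gt N k with hNk | hkN
    · have hE : myE a Finset.univ (k + 1) = 0 := by
        unfold myE
        rw [Finset.powersetCard_eq_empty.2 (by simpa using Nat.lt_succ_of_le hNk),
          Finset.sum_empty]
      rw [hE, zero_mul]
      positivity
    · have hNk' : (0 : ℝ) ≤ (N : ℝ) - k := by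
        have := hkN.le
        push_cast
        exact sub_nonneg.2 (by exact_mod_cast this)
      have key := step_ineq ha (N := N) k
      have h1 : ((k : ℝ) + 1) * (myE a Finset.univ (k + 1) * (N : ℝ) ^ (k + 1))
          ≤ ((k : ℝ) + 1) * ((N.choose (k + 1) : ℝ) * (∑ j, a j) ^ (k + 1)) := by
        have hNpow : (0 : ℝ) ≤ (N : ℝ) ^ k := by positivity
        calc ((k : ℝ) + 1) * (myE a Finset.univ (k + 1) * (N : ℝ) ^ (k + 1))
            = (N : ℝ) ^ k * ((N : ℝ) * (((k : ℝ) + 1) * myE a Finset.univ (k + 1))) := by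
              ring
          _ ≤ (N : ℝ) ^ k * ((∑ j, a j) * (((N : ℝ) - k) * myE a Finset.univ k)) :=
              mul_le_mul_of_nonneg_left key hNpow
          _ = (((N : ℝ) - k) * (∑ j, a j)) * (myE a Finset.univ k * (N : ℝ) ^ k) := by
              ring
          _ ≤ (((N : ℝ) - k) * (∑ j, a j)) * ((N.choose k : ℝ) * (∑ j, a j) ^ k) := by
              apply mul_le_mul_of_nonneg_left ih
              positivity
          _ = ((k : ℝ) + 1) * ((N.choose (k + 1) : ℝ) * (∑ j, a j) ^ (k + 1)) := by
              have hcast : ((N - k : ℕ) : ℝ) = (N : ℝ) - k := by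
                rw [Nat.cast_sub hkN.le]
              have hch : (N.choose (k + 1) : ℝ) * ((k : ℝ) + 1)
                  = (N.choose k : ℝ) * ((N : ℝ) - k) := by
                rw [← hcast]
                exact_mod_cast congrArg (Nat.cast (R := ℝ)) (Nat.choose_succ_right_eq N k)
              linear_combination (-((∑ j, a j) ^ k * (∑ j, a j))) * hch
      have hpos : (0 : ℝ) < (k : ℝ) + 1 := by positivity
      exact le_of_mul_le_mul_left h1 hpos

lemma fiber_card {n : ℕ} (s : Finset (Fin N)) (hs : s.card = n) :
    (Finset.univ.filter (fun σ : Fin n ↪ Fin N => Finset.image σ Finset.univ = s)).card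
      = (Nat.factorial n) := by
  rw [← Fintype.card_subtype]
  have e : {σ : Fin n ↪ Fin N // Finset.image σ Finset.univ = s} ≃ (Fin n ↪ {x // x ∈ s}) := by
    refine
      { toFun := fun σ => ⟨fun i => ⟨σ.1 i, by have hm := Finset.mem_image_of_mem σ.1 (Finset.mem_univ i); rwa [σ.2] at hm⟩,
          fun i j h => σ.1.injective (by simpa using congrArg Subtype.val h)⟩,
        invFun := fun e => ⟨e.trans (Function.Embedding.subtype _), ?_⟩,
        left_inv := fun σ => ?_,
        right_inv := fun e => ?_ }
    · have hsub : Finset.image (e.trans (Function.Embedding.subtype _)) Finset.univ ⊆ s := by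
        intro x hx
        obtain ⟨i, -, rfl⟩ := Finset.mem_image.1 hx
        exact (e i).2
      refine Finset.eq_of_subset_of_card_le hsub ?_
      rw [Finset.card_image_of_injective _ (e.trans (Function.Embedding.subtype _)).injective,
        Finset.card_univ, Fintype.card_fin, hs]
    · ext i; rfl
    · ext i; rfl
  rw [Fintype.card_congr e, Fintype.card_embedding_eq, Fintype.card_coe, hs,
    Fintype.card_fin, Nat.descFactorial_self]

lemma emb_sum (a : Fin N → ℝ) (n : ℕ) :
    ∑ σ : Fin n ↪ Fin N, ∏ i, a (σ i) = ((Nat.factorial n) : ℝ) * myE a Finset.univ n := by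
  have hmap : ∀ σ : Fin n ↪ Fin N, σ ∈ (Finset.univ : Finset (Fin n ↪ Fin N)) →
      Finset.image σ Finset.univ ∈ Finset.univ.powersetCard n := fun σ _ =>
    Finset.mem_powersetCard.2 ⟨Finset.subset_univ _, by
      rw [Finset.card_image_of_injective _ σ.injective, Finset.card_univ, Fintype.card_fin]⟩
  rw [← Finset.sum_fiberwise_of_maps_to hmap (fun σ => ∏ i, a (σ i))]
  unfold myE
  rw [Finset.mul_sum]
  refine Finset.sum_congr rfl fun s hs => ?_
  have hcard : s.card = n := (Finset.mem_powersetCard.1 hs).2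
  have hval : ∀ σ ∈ Finset.univ.filter (fun σ : Fin n ↪ Fin N => Finset.image σ Finset.univ = s),
      (∏ i, a (σ i)) = ∏ j ∈ s, a j := by
    intro σ hσ
    have him := (Finset.mem_filter.1 hσ).2
    rw [← him, Finset.prod_image (fun i _ j _ h => σ.injective h)]
  rw [Finset.sum_congr rfl hval, Finset.sum_const, nsmul_eq_mul, fiber_card s hcard]

lemma two_point (p q : ℝ) (hp : 0 ≤ p) (hq : 0 ≤ q) (hpq : p + q = 1) (u : ℝ) :
    p * Real.exp (-u) + q * Real.exp u ≤ Real.exp ((q - p) * u + u ^ 2 / 2) := by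
  set g : ℝ → ℝ := fun u => p * Real.exp (-u) + q * Real.exp u with hg_def
  have hgpos : ∀ u, 0 < g u := by
    intro u
    rcases eq_or_lt_of_le hp with h0 | h0
    · have hq1 : q = 1 := by linarith
      simp [hg_def, ← h0, hq1, Real.exp_pos]
    · have := Real.exp_pos (-u)
      have := Real.exp_pos u
      positivity
  set g' : ℝ → ℝ := fun u => q * Real.exp u - p * Real.exp (-u) with hg'_def
  have hgd : ∀ u, HasDerivAt g (g' u) u := by
    intro u
    have h1 : HasDerivAt (fun u : ℝ => Real.exp (-u)) (-Real.exp (-u)) u := by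
      convert (hasDerivAt_neg u).exp using 1; ring
    have h2 := ((h1.const_mul p).add ((Real.hasDerivAt_exp u).const_mul q))
    refine h2.congr_deriv ?_
    simp [hg'_def]; ring
  have hg'd : ∀ u, HasDerivAt g' (g u) u := by
    intro u
    have h1 : HasDerivAt (fun u : ℝ => Real.exp (-u)) (-Real.exp (-u)) u := by
      convert (hasDerivAt_neg u).exp using 1; ring
    have h2 := (((Real.hasDerivAt_exp u).const_mul q).sub (h1.const_mul p))
    refine h2.congr_deriv ?_
    simp [hg_def]; ring
  have hid : ∀ u, (g u) ^ 2 - (g' u) ^ 2 = 4 * p * q := by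
    intro u
    have hE : Real.exp u ≠ 0 := (Real.exp_pos u).ne'
    have hne : Real.exp (-u) = (Real.exp u)⁻¹ := Real.exp_neg u
    simp only [hg_def, hg'_def, hne]
    field_simp
    ring
  set F : ℝ → ℝ := fun u => (q - p) * u + u ^ 2 / 2 - Real.log (g u) with hF_def
  set F' : ℝ → ℝ := fun u => (q - p) + u - g' u / g u with hF'_def
  have hFd : ∀ u, HasDerivAt F (F' u) u := by
    intro u
    have hlog : HasDerivAt (fun u => Real.log (g u)) (g' u / g u) u :=
      (hgd u).log (hgpos u).ne'
    have hlin : HasDerivAt (fun u : ℝ => (q - p) * u + u ^ 2 / 2)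
        ((q - p) + u) u := by
      have h1 : HasDerivAt (fun u : ℝ => (q - p) * u) (q - p) u := by
        simpa using (hasDerivAt_id u).const_mul (q - p)
      have h2 : HasDerivAt (fun u : ℝ => u ^ 2 / 2) u u := by
        simpa using ((hasDerivAt_pow 2 u).div_const 2)
      exact h1.add h2
    exact hlin.sub hlog
  have hF'd : ∀ u, HasDerivAt F' (1 - (g u ^ 2 - g' u ^ 2) / g u ^ 2) u := by
    intro u
    have hdiv : HasDerivAt (fun u => g' u / g u)
        ((g u * g u - g' u * g' u) / g u ^ 2) u :=
      (hg'd u).div (hgd u) (hgpos u).ne'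
    have hlin : HasDerivAt (fun u : ℝ => (q - p) + u) 1 u := by
      exact (hasDerivAt_id' u).const_add (q - p)
    have := hlin.sub hdiv
    refine this.congr_deriv ?_
    ring
  have hF''nonneg : ∀ u, 0 ≤ 1 - (g u ^ 2 - g' u ^ 2) / g u ^ 2 := by
    intro u
    rw [hid u]
    have h1 : 4 * p * q ≤ g u ^ 2 := by
      have := hid u
      nlinarith [sq_nonneg (g' u)]
    have h2 : (0:ℝ) < g u ^ 2 := pow_pos (hgpos u) 2
    rw [sub_nonneg, div_le_one h2]
    exact h1
  have hF'mono : Monotone F' :=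
    monotone_of_deriv_nonneg (fun u => (hF'd u).differentiableAt)
      (fun u => by rw [(hF'd u).deriv]; exact hF''nonneg u)
  have hF'0 : F' 0 = 0 := by
    have hg0 : g 0 = 1 := by simp [hg_def]; linarith
    have hg'0 : g' 0 = q - p := by simp [hg'_def]
    simp [hF'_def, hg0, hg'0]
  have hF0 : F 0 = 0 := by
    have hg0 : g 0 = 1 := by simp [hg_def]; linarith
    simp [hF_def, hg0]
  -- F is nonneg everywhere
  have hFnonneg : ∀ u, 0 ≤ F u := by
    intro u
    rcases le_total 0 u with hu | hu
    · have hmono : MonotoneOn F (Set.Ici (0:ℝ)) := by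
        apply monotoneOn_of_deriv_nonneg (convex_Ici 0)
          (Continuous.continuousOn (by
            have : Differentiable ℝ F := fun u => (hFd u).differentiableAt
            exact this.continuous))
          (fun x _ => (hFd x).differentiableAt.differentiableWithinAt)
        intro x hx
        rw [(hFd x).deriv]
        have : (0:ℝ) ≤ x := le_of_lt (by simpa using hx)
        calc (0:ℝ) = F' 0 := hF'0.symm
          _ ≤ F' x := hF'mono this
      calc (0:ℝ) = F 0 := hF0.symm
        _ ≤ F u := hmono (Set.mem_Ici.2 le_rfl) (Set.mem_Ici.2 hu) hu
    · have hmono : AntitoneOn F (Set.Iic (0:ℝ)) := by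
        apply antitoneOn_of_deriv_nonpos (convex_Iic 0)
          (Continuous.continuousOn (by
            have : Differentiable ℝ F := fun u => (hFd u).differentiableAt
            exact this.continuous))
          (fun x _ => (hFd x).differentiableAt.differentiableWithinAt)
        intro x hx
        rw [(hFd x).deriv]
        have hx0 : x ≤ (0:ℝ) := le_of_lt (by simpa using hx)
        calc F' x ≤ F' 0 := hF'mono hx0
          _ = 0 := hF'0
      calc (0:ℝ) = F 0 := hF0.symm
        _ ≤ F u := hmono (Set.mem_Iic.2 hu) (Set.mem_Iic.2 le_rfl) hu
  have hlog : Real.log (g u) ≤ (q - p) * u + u ^ 2 / 2 := by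
    have := hFnonneg u
    simp only [hF_def] at this
    linarith
  calc g u = Real.exp (Real.log (g u)) := (Real.exp_log (hgpos u)).symm
    _ ≤ Real.exp ((q - p) * u + u ^ 2 / 2) := Real.exp_le_exp.2 hlog

lemma mgf_bound {N : ℕ} (hN : 0 < N) (l : Fin N → ℝ) (C : ℝ) (hC : 0 < C)
    (hbound : ∀ i, |l i| ≤ C) (μ : ℝ) (hμ : μ = (∑ i, l i) / N) (lam : ℝ) :
    (∑ i, Real.exp (lam * l i)) / N ≤ Real.exp (lam * μ + lam ^ 2 * C ^ 2 / 2) := by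
  have hNpos : (0:ℝ) < N := by exact_mod_cast hN
  have hC0 : C ≠ 0 := ne_of_gt hC
  have hsum : ∑ i, l i = N * μ := by rw [hμ]; field_simp
  have hμC : |μ| ≤ C := by
    rw [hμ, abs_div, abs_of_pos hNpos, div_le_iff₀ hNpos]
    calc |∑ i, l i| ≤ ∑ i, |l i| := Finset.abs_sum_le_sum_abs _ _
      _ ≤ ∑ _i : Fin N, C := Finset.sum_le_sum fun i _ => hbound i
      _ = C * N := by rw [Finset.sum_const, nsmul_eq_mul, Finset.card_univ,
          Fintype.card_fin, mul_comm]
  have hpoint : ∀ i, Real.exp (lam * l i)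
      ≤ ((C - l i) / (2 * C)) * Real.exp (-(lam * C))
        + ((C + l i) / (2 * C)) * Real.exp (lam * C) := by
    intro i
    have hx := abs_le.1 (hbound i)
    have ha : 0 ≤ (C - l i) / (2 * C) := by
      apply div_nonneg (by linarith) (by linarith)
    have hb : 0 ≤ (C + l i) / (2 * C) := by
      apply div_nonneg (by linarith) (by linarith)
    have hab : (C - l i) / (2 * C) + (C + l i) / (2 * C) = 1 := by
      field_simp
      ring
    have hconv := convexOn_exp.2 (Set.mem_univ (-(lam * C))) (Set.mem_univ (lam * C))
      ha hb hab
    simp only [smul_eq_mul] at hconv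
    have harg : (C - l i) / (2 * C) * -(lam * C) + (C + l i) / (2 * C) * (lam * C)
        = lam * l i := by
      field_simp
      ring
    rw [harg] at hconv
    exact hconv
  set p : ℝ := (C - μ) / (2 * C) with hp_def
  set q : ℝ := (C + μ) / (2 * C) with hq_def
  have hμ1 := abs_le.1 hμC
  have hp : 0 ≤ p := div_nonneg (by linarith) (by linarith)
  have hq : 0 ≤ q := div_nonneg (by linarith) (by linarith)
  have hpq : p + q = 1 := by rw [hp_def, hq_def]; field_simp; ring
  have hsum2 : ∑ i, Real.exp (lam * l i)
      ≤ N * (p * Real.exp (-(lam * C)) + q * Real.exp (lam * C)) := by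
    calc ∑ i, Real.exp (lam * l i)
        ≤ ∑ i, (((C - l i) / (2 * C)) * Real.exp (-(lam * C))
            + ((C + l i) / (2 * C)) * Real.exp (lam * C)) :=
          Finset.sum_le_sum fun i _ => hpoint i
      _ = N * (p * Real.exp (-(lam * C)) + q * Real.exp (lam * C)) := by
          rw [Finset.sum_add_distrib, ← Finset.sum_mul, ← Finset.sum_mul]
          have e1 : ∑ i, (C - l i) / (2 * C) = N * p := by
            rw [hp_def]
            rw [← Finset.sum_div]
            rw [Finset.sum_sub_distrib, hsum, Finset.sum_const, nsmul_eq_mul,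
              Finset.card_univ, Fintype.card_fin]
            field_simp
          have e2 : ∑ i, (C + l i) / (2 * C) = N * q := by
            rw [hq_def]
            rw [← Finset.sum_div]
            rw [Finset.sum_add_distrib, hsum, Finset.sum_const, nsmul_eq_mul,
              Finset.card_univ, Fintype.card_fin]
            field_simp
          rw [e1, e2]
          ring
  have htp := two_point p q hp hq hpq (lam * C)
  have hexp_eq : (q - p) * (lam * C) + (lam * C) ^ 2 / 2
      = lam * μ + lam ^ 2 * C ^ 2 / 2 := by
    rw [hp_def, hq_def]
    field_simp
    ring
  rw [div_le_iff₀ hNpos]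
  calc ∑ i, Real.exp (lam * l i)
      ≤ N * (p * Real.exp (-(lam * C)) + q * Real.exp (lam * C)) := hsum2
    _ ≤ N * Real.exp ((q - p) * (lam * C) + (lam * C) ^ 2 / 2) := by
        apply mul_le_mul_of_nonneg_left htp hNpos.le
    _ = Real.exp (lam * μ + lam ^ 2 * C ^ 2 / 2) * N := by rw [hexp_eq]; ring

theorem stmt6 {N n : ℕ} (hn : 1 ≤ n) (hnN : n ≤ N)
    (l : Fin N → ℝ) (C : ℝ) (hC : 0 < C) (hbound : ∀ i, |l i| ≤ C)
    (μ : ℝ) (hμ : μ = (∑ i, l i) / N) (t : ℝ) (ht : 0 < t) :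
    ((Finset.univ.filter
        (fun σ : Fin n ↪ Fin N => μ + t < (∑ i, l (σ i)) / n)).card : ℝ) /
      (Fintype.card (Fin n ↪ Fin N) : ℝ)
      ≤ Real.exp (-(n : ℝ) * t ^ 2 / (2 * C ^ 2)) := by
  have hN : 0 < N := lt_of_lt_of_le hn hnN
  have hNpos : (0:ℝ) < N := by exact_mod_cast hN
  have hnpos : (0:ℝ) < n := by exact_mod_cast hn
  set lam : ℝ := t / C ^ 2 with hlam_def
  have hlam : 0 < lam := div_pos ht (by positivity)
  set a : Fin N → ℝ := fun j => Real.exp (lam * l j) with ha_def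
  have ha : ∀ j, 0 ≤ a j := fun j => (Real.exp_pos _).le
  set S : ℝ := ∑ j, a j with hS_def
  have hSnn : 0 ≤ S := Finset.sum_nonneg fun j _ => ha j
  -- cardinality of the embedding space
  have hcard : (Fintype.card (Fin n ↪ Fin N) : ℝ)
      = (Nat.factorial n : ℝ) * (N.choose n : ℝ) := by
    rw [Fintype.card_embedding_eq, Fintype.card_fin, Fintype.card_fin,
      Nat.descFactorial_eq_factorial_mul_choose]
    push_cast
    ring
  have hDpos : (0:ℝ) < (Fintype.card (Fin n ↪ Fin N) : ℝ) := by
    rw [hcard]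
    have h1 : 0 < N.choose n := Nat.choose_pos hnN
    have h2 : 0 < Nat.factorial n := Nat.factorial_pos n
    positivity
  rw [div_le_iff₀ hDpos]
  -- Step 1: Chernoff pointwise bound
  have step1 : ((Finset.univ.filter
        (fun σ : Fin n ↪ Fin N => μ + t < (∑ i, l (σ i)) / n)).card : ℝ)
      ≤ Real.exp (-(lam * n * (μ + t))) * ∑ σ : Fin n ↪ Fin N, ∏ i, a (σ i) := by
    rw [Finset.mul_sum, Finset.card_eq_sum_ones, Nat.cast_sum]
    have hb1 : ∀ σ ∈ Finset.univ.filter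
        (fun σ : Fin n ↪ Fin N => μ + t < (∑ i, l (σ i)) / n),
        ((1:ℕ) : ℝ) ≤ Real.exp (-(lam * n * (μ + t))) * ∏ i, a (σ i) := by
      intro σ hσ
      have hσ' := (Finset.mem_filter.1 hσ).2
      have hprod : ∏ i, a (σ i) = Real.exp (lam * ∑ i, l (σ i)) := by
        rw [← Real.exp_sum, Finset.mul_sum]
      rw [hprod, ← Real.exp_add]
      have harg : 0 ≤ -(lam * n * (μ + t)) + lam * ∑ i, l (σ i) := by
        rw [lt_div_iff₀ hnpos] at hσ'
        nlinarith [hlam.le, hσ']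
      calc ((1:ℕ):ℝ) = 1 := by norm_num
        _ ≤ Real.exp (-(lam * n * (μ + t)) + lam * ∑ i, l (σ i)) := by
            rw [← Real.exp_zero]
            exact Real.exp_le_exp.2 harg
    calc (∑ σ ∈ Finset.univ.filter
          (fun σ : Fin n ↪ Fin N => μ + t < (∑ i, l (σ i)) / n), ((1:ℕ) : ℝ))
        ≤ ∑ σ ∈ Finset.univ.filter
          (fun σ : Fin n ↪ Fin N => μ + t < (∑ i, l (σ i)) / n),
          Real.exp (-(lam * n * (μ + t))) * ∏ i, a (σ i) := Finset.sum_le_sum hb1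
      _ ≤ ∑ σ : Fin n ↪ Fin N, Real.exp (-(lam * n * (μ + t))) * ∏ i, a (σ i) := by
          apply Finset.sum_le_sum_of_subset_of_nonneg (Finset.filter_subset _ _)
          intro σ _ _
          have := Real.exp_pos (-(lam * n * (μ + t)))
          have hp : 0 ≤ ∏ i, a (σ i) := Finset.prod_nonneg fun i _ => ha (σ i)
          positivity
  -- Step 2: Maclaurin bound on the embedding sum
  have step2 : ∑ σ : Fin n ↪ Fin N, ∏ i, a (σ i)
      ≤ (Fintype.card (Fin n ↪ Fin N) : ℝ) * (S / N) ^ n := by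
    rw [emb_sum, hcard]
    have hm := maclaurin ha n
    have hNn : (0:ℝ) < (N:ℝ) ^ n := by positivity
    have hE : myE a Finset.univ n ≤ (N.choose n : ℝ) * (S / N) ^ n := by
      rw [div_pow, ← mul_div_assoc, le_div_iff₀ hNn]
      exact hm
    calc (Nat.factorial n : ℝ) * myE a Finset.univ n
        ≤ (Nat.factorial n : ℝ) * ((N.choose n : ℝ) * (S / N) ^ n) := by
          apply mul_le_mul_of_nonneg_left hE
          positivity
      _ = (Nat.factorial n : ℝ) * (N.choose n : ℝ) * (S / N) ^ n := by ring
  -- Step 3: Hoeffding's lemma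
  have step3 : S / N ≤ Real.exp (lam * μ + lam ^ 2 * C ^ 2 / 2) :=
    mgf_bound hN l C hC hbound μ hμ lam
  have step3' : (S / N) ^ n ≤ Real.exp (n * (lam * μ + lam ^ 2 * C ^ 2 / 2)) := by
    calc (S / N) ^ n ≤ Real.exp (lam * μ + lam ^ 2 * C ^ 2 / 2) ^ n :=
          pow_le_pow_left₀ (by positivity) step3 n
      _ = Real.exp (n * (lam * μ + lam ^ 2 * C ^ 2 / 2)) := by
          rw [← Real.exp_nat_mul]
  -- assemble
  have hfinal : Real.exp (-(lam * n * (μ + t)))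
      * Real.exp (n * (lam * μ + lam ^ 2 * C ^ 2 / 2))
      = Real.exp (-(n : ℝ) * t ^ 2 / (2 * C ^ 2)) := by
    rw [← Real.exp_add]
    congr 1
    rw [hlam_def]
    field_simp
    ring
  calc ((Finset.univ.filter
        (fun σ : Fin n ↪ Fin N => μ + t < (∑ i, l (σ i)) / n)).card : ℝ)
      ≤ Real.exp (-(lam * n * (μ + t))) * ∑ σ : Fin n ↪ Fin N, ∏ i, a (σ i) := step1
    _ ≤ Real.exp (-(lam * n * (μ + t)))
        * ((Fintype.card (Fin n ↪ Fin N) : ℝ) * (S / N) ^ n) := by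
        apply mul_le_mul_of_nonneg_left step2 (Real.exp_pos _).le
    _ ≤ Real.exp (-(lam * n * (μ + t)))
        * ((Fintype.card (Fin n ↪ Fin N) : ℝ)
          * Real.exp (n * (lam * μ + lam ^ 2 * C ^ 2 / 2))) := by
        apply mul_le_mul_of_nonneg_left _ (Real.exp_pos _).le
        exact mul_le_mul_of_nonneg_left step3' hDpos.le
    _ = Real.exp (-(n : ℝ) * t ^ 2 / (2 * C ^ 2)) * (Fintype.card (Fin n ↪ Fin N) : ℝ) := by
        rw [← hfinal]; ring
end
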